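/- arXiv:1405.6214 — 4 statements merged into one kernel-verified Lean document; each statement's English description precedes it below -/
import Mathlib

section
/- For all n ≥ 0 and j with 0 ≤ j ≤ d−1, the n-th term (0-indexed) of the increasing sequence of natural numbers whose base-d digit sum is congruent to j mod d equals d·n + ((j − t_d(n)) mod d). -/
/-- Sum of base-`d` digits of `n`. -/
def sdig (d n : ℕ) : ℕ := (Nat.digits d n).sum

/-- `t_d(n)`: base-`d` digit sum of `n`, reduced mod `d`. -/
def td (d n : ℕ) : ℕ := sdig d n % d

/-- `a_{j,d}(n)`: n-th natural (0-indexed, increasing) with base-`d` digit sum ≡ j mod d. -/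
noncomputable def agen (d j n : ℕ) : ℕ := Nat.nth (fun k => sdig d k % d = j) n

/-- n-th odious number (binary digit sum odd), 0-indexed increasing. -/
noncomputable def odious (n : ℕ) : ℕ := Nat.nth (fun k => (Nat.digits 2 k).sum % 2 = 1) n

/-- n-th evil number (binary digit sum even), 0-indexed increasing. -/
noncomputable def evil (n : ℕ) : ℕ := Nat.nth (fun k => (Nat.digits 2 k).sum % 2 = 0) n

/-- Thue–Morse sequence: parity of the binary digit sum. -/
def tm (n : ℕ) : ℕ := (Nat.digits 2 n).sum % 2


lemma sdig_mul_add (d : ℕ) (hd : 2 ≤ d) (m r : ℕ) (hr : r < d) :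
    sdig d (d * m + r) = sdig d m + r := by
  rcases Nat.eq_zero_or_pos (d * m + r) with h | h
  · have hm : m = 0 := by
      rcases Nat.eq_zero_or_pos m with h' | h'
      · exact h'
      · exfalso; nlinarith
    have hr0 : r = 0 := by omega
    simp [hm, hr0, sdig]
  · unfold sdig
    rw [Nat.digits_def' (by omega : 1 < d) h]
    have h1 : (d * m + r) % d = r := by
      rw [Nat.mul_add_mod]; exact Nat.mod_eq_of_lt hr
    have h2 : (d * m + r) / d = m := by
      rw [Nat.mul_add_div (by omega), Nat.div_eq_of_lt hr]; omega
    rw [h1, h2, List.sum_cons]; omega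

noncomputable def gfun (d j m : ℕ) : ℕ := d * m + (j + d - td d m) % d

lemma cast_key (d j t : ℕ) (hd : 2 ≤ d) (ht : t < d) :
    (((j + d - t) % d : ℕ) : ℤ) = ((j : ℤ) - t) % d := by
  have h1 : t ≤ j + d := by omega
  push_cast [h1]
  have : (j : ℤ) + d - t = (j - t) + d := by ring
  rw [this]
  simpa using Int.add_mul_emod_self_left (a := (j:ℤ) - t) (b := (d:ℤ)) (c := 1)

lemma p_gfun (d j : ℕ) (hd : 2 ≤ d) (hj : j < d) (m : ℕ) :
    sdig d (gfun d j m) % d = j := by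
  unfold gfun
  have ht : td d m < d := Nat.mod_lt _ (by omega)
  rw [sdig_mul_add d hd m _ (Nat.mod_lt _ (by omega))]
  have h1 : sdig d m % d = td d m := rfl
  rw [Nat.add_mod, h1, Nat.mod_mod_of_dvd _ dvd_rfl, Nat.add_mod_mod]
  have h2 : td d m + (j + d - td d m) = j + d := by omega
  rw [h2, Nat.add_mod_right, Nat.mod_eq_of_lt hj]

lemma gfun_strictMono (d j : ℕ) (hd : 2 ≤ d) : StrictMono (gfun d j) := by
  apply strictMono_nat_of_lt_succ
  intro m
  unfold gfun
  have h1 : (j + d - td d m) % d < d := Nat.mod_lt _ (by omega)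
  have h2 : (j + d - td d (m + 1)) % d < d := Nat.mod_lt _ (by omega)
  have : d * (m + 1) = d * m + d := by ring
  omega

lemma eq_gfun_of_p (d j : ℕ) (hd : 2 ≤ d) (hj : j < d) (k : ℕ)
    (hk : sdig d k % d = j) : k = gfun d j (k / d) := by
  set m := k / d with hm
  have hkd : k = d * m + k % d := by
    rw [hm]; exact (Nat.div_add_mod k d).symm
  have hr : k % d < d := Nat.mod_lt _ (by omega)
  have hs : sdig d k = sdig d m + k % d := by
    conv_lhs => rw [hkd]
    exact sdig_mul_add d hd m _ hr
  -- show k % d = (j + d - td d m) % d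
  have ht : td d m < d := Nat.mod_lt _ (by omega)
  have key : k % d = (j + d - td d m) % d := by
    have hc : ((k % d : ℕ) : ℤ) % d = ((j : ℤ) - td d m) % d := by
      have h1 : (sdig d m + k % d) % d = j := by rw [← hs]; exact hk
      have h1' : (((sdig d m : ℤ) + (k % d : ℕ)) % d) = (j : ℤ) := by
        exact_mod_cast congrArg (Nat.cast : ℕ → ℤ) h1
      have htd : ((td d m : ℕ) : ℤ) = (sdig d m : ℤ) % d := by
        unfold td; push_cast; ring
      calc ((k % d : ℕ) : ℤ) % d
          = ((sdig d m : ℤ) + (k % d : ℕ) - sdig d m) % d := by ring_nf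
        _ = (((sdig d m : ℤ) + (k % d : ℕ)) % d - (sdig d m : ℤ) % d) % d := by
            rw [Int.sub_emod]
        _ = ((j : ℤ) - td d m) % d := by rw [h1', htd, Int.sub_emod, Int.emod_emod_of_dvd _ dvd_rfl, ← Int.sub_emod]
    have h2 : (((j + d - td d m) % d : ℕ) : ℤ) = ((j : ℤ) - td d m) % d :=
      cast_key d j (td d m) hd ht
    have h3 : ((k % d : ℕ) : ℤ) % d = ((k % d : ℕ) : ℤ) :=
      Int.emod_eq_of_lt (by positivity) (by exact_mod_cast hr)
    have : ((k % d : ℕ) : ℤ) = (((j + d - td d m) % d : ℕ) : ℤ) := by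
      rw [← h3, hc, ← h2]
    exact_mod_cast this
  rw [gfun, ← key, ← hkd]

lemma count_gfun (d j : ℕ) (hd : 2 ≤ d) (hj : j < d) (n : ℕ) :
    Nat.count (fun k => sdig d k % d = j) (gfun d j n) = n := by
  rw [Nat.count_eq_card_filter_range]
  have himg : ({x ∈ Finset.range (gfun d j n) | sdig d x % d = j} : Finset ℕ)
      = (Finset.range n).image (gfun d j) := by
    ext x
    simp only [Finset.mem_filter, Finset.mem_range, Finset.mem_image]
    constructor
    · rintro ⟨hlt, hp⟩
      refine ⟨x / d, ?_, (eq_gfun_of_p d j hd hj x hp).symm⟩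
      have := eq_gfun_of_p d j hd hj x hp
      rw [this] at hlt
      exact (gfun_strictMono d j hd).lt_iff_lt.mp hlt
    · rintro ⟨m, hm, rfl⟩
      exact ⟨(gfun_strictMono d j hd) hm, p_gfun d j hd hj m⟩
  rw [himg, Finset.card_image_of_injective _ (gfun_strictMono d j hd).injective,
    Finset.card_range]

lemma agen_eq (d j : ℕ) (hd : 2 ≤ d) (hj : j < d) (n : ℕ) :
    agen d j n = gfun d j n := by
  unfold agen
  conv_lhs => rw [← count_gfun d j hd hj n]
  exact Nat.nth_count (p_gfun d j hd hj n)

theorem stmt1 (d : ℕ) (hd : 2 ≤ d) (j : ℕ) (hj : j ≤ d - 1) (n : ℕ) :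
    (agen d j n : ℤ) = d * n + ((j : ℤ) - td d n) % d := by
  have hj' : j < d := by omega
  rw [agen_eq d j hd hj' n]
  unfold gfun
  rw [Nat.cast_add, Nat.cast_mul, cast_key d j (td d n) hd (Nat.mod_lt _ (by omega))]
end

section
/- For every natural number n, a(a(n)) = 2·a(n), where a is the increasing enumeration of odious numbers. -/
namespace Nat

theorem digits_sum_add_base_mul {b x : ℕ} (hb : 1 < b) (hx : x < b) (y : ℕ) :
    (digits b (x + b * y)).sum = x + (digits b y).sum := by
  by_cases hxy : x ≠ 0 ∨ y ≠ 0
  · rw [digits_add b hb x y hx hxy, List.sum_cons]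
  · obtain ⟨rfl, rfl⟩ : x = 0 ∧ y = 0 := by tauto
    simp

theorem digits_two_sum_two_mul (m : ℕ) : (digits 2 (2 * m)).sum = (digits 2 m).sum := by
  simpa using digits_sum_add_base_mul (x := 0) one_lt_two two_pos m

theorem digits_two_sum_two_mul_add_one (m : ℕ) :
    (digits 2 (2 * m + 1)).sum = (digits 2 m).sum + 1 := by
  rw [add_comm, digits_sum_add_base_mul one_lt_two one_lt_two, add_comm]

section Alternating

variable {p : ℕ → Prop} [DecidablePred p]

theorem count_two_mul_of_forall_iff_not (hp : ∀ k, p (2 * k + 1) ↔ ¬p (2 * k)) (n : ℕ) :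
    count p (2 * n) = n := by
  induction n with
  | zero => simp
  | succ n ih =>
    rw [mul_add_one, count_succ, count_succ, ih]
    by_cases h : p (2 * n) <;> simp [h, hp]

theorem infinite_setOf_of_forall_iff_not (hp : ∀ k, p (2 * k + 1) ↔ ¬p (2 * k)) :
    {k | p k}.Infinite := by
  refine Set.infinite_of_forall_exists_gt fun a => ?_
  by_cases h : p (2 * a + 2)
  · exact ⟨2 * a + 2, h, by omega⟩
  · exact ⟨2 * a + 3, (hp (a + 1)).2 h, by omega⟩

end Alternating

end Nat

theorem stmt3 (n : ℕ) : odious (odious n) = 2 * odious n := by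
  set P : ℕ → Prop := fun k => (Nat.digits 2 k).sum % 2 = 1
  have hP : ∀ k, P (2 * k + 1) ↔ ¬P (2 * k) := fun k => by
    simp only [P, Nat.digits_two_sum_two_mul_add_one, Nat.digits_two_sum_two_mul]
    omega
  have hm : P (odious n) := Nat.nth_mem_of_infinite (Nat.infinite_setOf_of_forall_iff_not hP) n
  have h2m : P (2 * odious n) := by simpa only [P, Nat.digits_two_sum_two_mul] using hm
  calc odious (odious n) = Nat.nth P (Nat.count P (2 * odious n)) := by
        rw [Nat.count_two_mul_of_forall_iff_not hP]; rfl
    _ = 2 * odious n := Nat.nth_count h2m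
end

section
/- For every natural number n, b(b(n)) = 2·b(n), where b is the increasing enumeration of evil numbers. -/
lemma tm_two_mul (m : ℕ) : tm (2 * m) = tm m := by
  rcases Nat.eq_zero_or_pos m with rfl | hm
  · rfl
  · unfold tm
    rw [Nat.digits_def' (by norm_num : 1 < 2) (by positivity)]
    simp [Nat.mul_div_cancel_left _ (by norm_num : 0 < 2), Nat.mul_mod_right]

lemma tm_two_mul_add_one (m : ℕ) : tm (2 * m + 1) = (tm m + 1) % 2 := by
  unfold tm
  rw [Nat.digits_def' (by norm_num : 1 < 2) (by omega)]
  have h1 : (2 * m + 1) % 2 = 1 := by omega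
  have h2 : (2 * m + 1) / 2 = m := by omega
  rw [h1, h2]
  simp [Nat.add_mod, Nat.add_comm]

lemma tm_lt_two (m : ℕ) : tm m < 2 := Nat.mod_lt _ (by norm_num)

lemma count_evil (m : ℕ) :
    Nat.count (fun k => (Nat.digits 2 k).sum % 2 = 0) (2 * m) = m := by
  induction m with
  | zero => simp
  | succ m ih =>
    have e : 2 * (m + 1) = (2 * m + 1) + 1 := by ring
    rw [e, Nat.count_succ, Nat.count_succ, ih]
    have h1 : ((Nat.digits 2 (2 * m)).sum % 2 = 0) ↔ tm m = 0 := by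
      have := tm_two_mul m; unfold tm at this ⊢; omega
    have h2 : ((Nat.digits 2 (2 * m + 1)).sum % 2 = 0) ↔ (tm m + 1) % 2 = 0 := by
      have := tm_two_mul_add_one m; unfold tm at this ⊢; omega
    have := tm_lt_two m
    have h01 : tm m = 0 ∨ tm m = 1 := by omega
    rcases h01 with h | h <;>
      simp only [h1, h2, h] <;> norm_num

lemma evil_eq (m : ℕ) : evil m = 2 * m + tm m := by
  have hp : (fun k => (Nat.digits 2 k).sum % 2 = 0) (2 * m + tm m) := by
    have := tm_lt_two m
    have h01 : tm m = 0 ∨ tm m = 1 := by omega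
    rcases h01 with h | h
    · have := tm_two_mul m
      unfold tm at this h ⊢
      simp [h]; omega
    · have := tm_two_mul_add_one m
      unfold tm at this h ⊢
      rw [h] at this ⊢; omega
  have hc : Nat.count (fun k => (Nat.digits 2 k).sum % 2 = 0) (2 * m + tm m) = m := by
    have := tm_lt_two m
    have h01 : tm m = 0 ∨ tm m = 1 := by omega
    rcases h01 with h | h
    · rw [h]; simpa using count_evil m
    · rw [h, Nat.count_succ, count_evil m]
      have h1 : ¬ ((Nat.digits 2 (2 * m)).sum % 2 = 0) := by
        have := tm_two_mul m; unfold tm at this h; omega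
      simp [h1]
  have := Nat.nth_count (p := fun k => (Nat.digits 2 k).sum % 2 = 0) hp
  rw [hc] at this
  exact this

lemma evil_infinite : {k | (Nat.digits 2 k).sum % 2 = 0}.Infinite := by
  have hinj : Function.Injective (fun k : ℕ => 3 * 4 ^ k) := by
    have : StrictMono (fun k : ℕ => 3 * 4 ^ k) := by
      intro a b h
      have : (4:ℕ) ^ a < 4 ^ b := Nat.pow_lt_pow_right (by norm_num) h
      simpa using (mul_lt_mul_iff_right₀ (show (0:ℕ) < 3 by norm_num)).mpr this
    exact this.injective
  have hmem : ∀ k : ℕ, (fun k : ℕ => 3 * 4 ^ k) k ∈ {k | (Nat.digits 2 k).sum % 2 = 0} := by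
    intro k
    induction k with
    | zero => simp [Set.mem_setOf_eq]
    | succ k ih =>
      have e : 3 * 4 ^ (k + 1) = 2 * (2 * (3 * 4 ^ k)) := by ring
      have h1 := tm_two_mul (2 * (3 * 4 ^ k))
      have h2 := tm_two_mul (3 * 4 ^ k)
      simp only [Set.mem_setOf_eq] at ih ⊢
      unfold tm at h1 h2
      rw [e]; omega
  exact Set.infinite_of_injective_forall_mem hinj hmem

theorem stmt4 (n : ℕ) : evil (evil n) = 2 * evil n := by
  have hmem : (Nat.digits 2 (evil n)).sum % 2 = 0 :=
    Nat.nth_mem_of_infinite evil_infinite n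
  have : tm (evil n) = 0 := hmem
  rw [evil_eq (evil n), this, Nat.add_zero]
end

section
/- For every natural number n, a(b(n)) = 2·b(n) + 1 and b(a(n)) = 2·a(n) + 1, where a and b enumerate the odious and evil numbers respectively in increasing order. -/
lemma sum_two_mul (k : ℕ) : (Nat.digits 2 (2 * k)).sum = (Nat.digits 2 k).sum := by
  rcases Nat.eq_zero_or_pos k with rfl | hk
  · simp
  · rw [Nat.digits_def' (by norm_num) (by omega)]
    simp [Nat.mul_div_cancel_left _ (by norm_num : (0:ℕ) < 2), Nat.mul_mod_right]

lemma sum_two_mul_add_one (k : ℕ) :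
    (Nat.digits 2 (2 * k + 1)).sum = (Nat.digits 2 k).sum + 1 := by
  rw [Nat.digits_def' (by norm_num) (by omega)]
  have h1 : (2 * k + 1) % 2 = 1 := by omega
  have h2 : (2 * k + 1) / 2 = k := by omega
  rw [h1, h2]
  simp [Nat.add_comm]

lemma count_two_mul (m : ℕ) :
    Nat.count (fun k => (Nat.digits 2 k).sum % 2 = 1) (2 * m) = m ∧
    Nat.count (fun k => (Nat.digits 2 k).sum % 2 = 0) (2 * m) = m := by
  induction m with
  | zero => simp
  | succ m ih =>
    have h2 : 2 * (m + 1) = 2 * m + 1 + 1 := by ring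
    have he := sum_two_mul m
    have ho := sum_two_mul_add_one m
    rw [h2]
    obtain ⟨ih1, ih2⟩ := ih
    rw [Nat.count_succ, Nat.count_succ, Nat.count_succ, Nat.count_succ]
    simp only [he, ho, ih1, ih2]
    constructor <;> split_ifs <;> omega

theorem stmt5 (n : ℕ) :
    odious (evil n) = 2 * evil n + 1 ∧ evil (odious n) = 2 * odious n + 1 := by
  have hinf : ∀ j, j < 2 → {k | (Nat.digits 2 k).sum % 2 = j}.Infinite := by
    intro j hj
    apply Set.infinite_of_not_bddAbove
    rintro ⟨B, hB⟩
    have key : ∀ m, m ∈ {k | (Nat.digits 2 k).sum % 2 = j} → m ≤ B := hB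
    have hm : ∃ m, m ∈ {k | (Nat.digits 2 k).sum % 2 = j} ∧ B < m := by
      have he := sum_two_mul (B + 1)
      have ho := sum_two_mul_add_one (B + 1)
      rcases Nat.mod_two_eq_zero_or_one ((Nat.digits 2 (B + 1)).sum) with h | h
      · rcases (by omega : j = 0 ∨ j = 1) with rfl | rfl
        · exact ⟨2 * (B + 1), show _ % 2 = 0 by rw [he]; omega, by omega⟩
        · exact ⟨2 * (B + 1) + 1, show _ % 2 = 1 by rw [ho]; omega, by omega⟩
      · rcases (by omega : j = 0 ∨ j = 1) with rfl | rfl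
        · exact ⟨2 * (B + 1) + 1, show _ % 2 = 0 by rw [ho]; omega, by omega⟩
        · exact ⟨2 * (B + 1), show _ % 2 = 1 by rw [he]; omega, by omega⟩
    obtain ⟨m, hm1, hm2⟩ := hm
    exact absurd (key m hm1) (by omega)
  constructor
  · -- odious (evil n) = 2 * evil n + 1
    set m := evil n with hm
    have hpm : (Nat.digits 2 m).sum % 2 = 0 :=
      Nat.nth_mem_of_infinite (hinf 0 (by norm_num)) n
    have hodd : (Nat.digits 2 (2 * m + 1)).sum % 2 = 1 := by
      rw [sum_two_mul_add_one]; omega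
    have hcount : Nat.count (fun k => (Nat.digits 2 k).sum % 2 = 1) (2 * m + 1) = m := by
      rw [Nat.count_succ, (count_two_mul m).1]
      have : ¬ ((Nat.digits 2 (2 * m)).sum % 2 = 1) := by
        rw [sum_two_mul]; omega
      simp [this]
    have := Nat.nth_count (p := fun k => (Nat.digits 2 k).sum % 2 = 1) hodd
    rw [hcount] at this
    exact this
  · set m := odious n with hm
    have hpm : (Nat.digits 2 m).sum % 2 = 1 :=
      Nat.nth_mem_of_infinite (hinf 1 (by norm_num)) n
    have heven : (Nat.digits 2 (2 * m + 1)).sum % 2 = 0 := by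
      rw [sum_two_mul_add_one]; omega
    have hcount : Nat.count (fun k => (Nat.digits 2 k).sum % 2 = 0) (2 * m + 1) = m := by
      rw [Nat.count_succ, (count_two_mul m).2]
      have : ¬ ((Nat.digits 2 (2 * m)).sum % 2 = 0) := by
        rw [sum_two_mul]; omega
      simp [this]
    have := Nat.nth_count (p := fun k => (Nat.digits 2 k).sum % 2 = 0) heven
    rw [hcount] at this
    exact this
end
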